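/- arXiv:1102.2101 — 2 statements merged into one kernel-verified Lean document; each statement's English description precedes it below -/
import Mathlib

section
/- Let L be the τ-pinball loss and Q a probability measure with support in [−1,1]. With t*_min the minimum of the τ-quantile set of Q and q_− := Q([t*_min,∞)) − (1−τ), for all t ≥ 0 the excess inner risk satisfies C_Q(t*_min − t) − C*_Q = t·q_− + ∫_0^t Q((t*_min − s, t*_min)) ds. -/
open MeasureTheory Set

/-- The τ-pinball loss. -/
noncomputable def pinball (τ y t : ℝ) : ℝ := if y < t then (1 - τ) * (t - y) else τ * (y - t)

/-- The τ-quantile set F*_τ(Q). -/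
def quantileSet (Q : Measure ℝ) (τ : ℝ) : Set ℝ :=
  {t | τ ≤ (Q (Set.Iic t)).toReal ∧ 1 - τ ≤ (Q (Set.Ici t)).toReal}

noncomputable def tqmin (Q : Measure ℝ) (τ : ℝ) : ℝ := sInf (quantileSet Q τ)
noncomputable def tqmax (Q : Measure ℝ) (τ : ℝ) : ℝ := sSup (quantileSet Q τ)

/-- The inner pinball risk C_Q(t). -/
noncomputable def innerRisk (Q : Measure ℝ) (τ t : ℝ) : ℝ := ∫ y, pinball τ y t ∂Q

/-- `Q` has a τ-quantile of type `q` with constants `α ∈ (0,2]` and `b > 0`. -/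
noncomputable def quantileTypeQ (Q : Measure ℝ) (τ q α b : ℝ) : Prop :=
  (1 < q ∧ α ∈ Set.Ioc (0:ℝ) 2 ∧ 0 < b ∧
    ∀ s ∈ Set.Icc (0:ℝ) α,
      b * s ^ (q - 1) ≤ (Q (Set.Ioo (tqmin Q τ - s) (tqmin Q τ))).toReal ∧
      b * s ^ (q - 1) ≤ (Q (Set.Ioo (tqmax Q τ) (tqmax Q τ + s))).toReal)
  ∨ (q = 1 ∧ α = 2 ∧ 0 < (Q {tqmin Q τ}).toReal ∧ 0 < (Q {tqmax Q τ}).toReal ∧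
      b = (if tqmin Q τ ≠ tqmax Q τ
            then min (Q {tqmin Q τ}).toReal (Q {tqmax Q τ}).toReal
            else min (τ - (Q (Set.Iio (tqmin Q τ))).toReal)
                     ((Q (Set.Iic (tqmax Q τ))).toReal - τ)))

/-!
Write the pinball loss as `τ (y - t) + (t - y)⁺`. By Fubini, `∫ ((b - y)⁺ - (a - y)⁺) dQ(y)` is
`∫ₐᵇ Q((-∞, s]) ds`, so `C_Q(b) - C_Q(a) = ∫ₐᵇ (Q((-∞, s]) - τ) ds` for `a ≤ b`. Substituting
`s ↦ m - s` and splitting `(-∞, m) = (-∞, m - s] ∪ (m - s, m)` yields the claimed formula with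
`C_Q(m)` in place of `C*_Q`, at every point `m`. At a τ-quantile `m` the right-hand side is
nonnegative, and so is `Q((-∞, s]) - τ` for `s ≥ m`; hence quantiles minimise `C_Q`. Finally
`t*_min` is itself a quantile: the quantile set is nonempty, bounded below, and closed, because
`t ↦ Q((-∞, t])` is right-continuous and `t ↦ Q([t, ∞))` is left-continuous.
-/

lemma pinball_eq_add_max (τ y t : ℝ) : pinball τ y t = τ * (y - t) + max (t - y) 0 := by
  unfold pinball
  split_ifs
  · rw [max_eq_left (by linarith)]; ring
  · rw [max_eq_right (by linarith)]; ring

lemma max_sub_sub_max_sub_eq_integral_indicator {a b : ℝ} (hab : a ≤ b) (y : ℝ) :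
    max (b - y) 0 - max (a - y) 0 = ∫ s in a..b, (Ici y).indicator 1 s := by
  rw [intervalIntegral.integral_of_le hab,
    integral_congr_ae (ae_restrict_of_ae (indicator_ae_eq_of_ae_eq_set Ioi_ae_eq_Ici.symm)),
    integral_indicator_one measurableSet_Ioi, measureReal_restrict_apply measurableSet_Ioi,
    inter_comm, Ioc_inter_Ioi, Real.volume_real_Ioc]
  simp only [max_def]
  split_ifs <;> linarith

section InnerRisk

variable {Q : Measure ℝ}

lemma integral_max_sub_sub_max_sub [IsFiniteMeasure Q] {a b : ℝ} (hab : a ≤ b) :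
    ∫ y, (max (b - y) 0 - max (a - y) 0) ∂Q = ∫ s in a..b, Q.real (Iic s) := by
  have : Fact (volume (Ioc a b) < ⊤) := ⟨measure_Ioc_lt_top⟩
  have hint : Integrable (Function.uncurry fun y s => (Ici y).indicator (1 : ℝ → ℝ) s)
      (Q.prod (volume.restrict (Ioc a b))) := by
    have h : (Function.uncurry fun y s => (Ici y).indicator (1 : ℝ → ℝ) s)
        = {p : ℝ × ℝ | p.1 ≤ p.2}.indicator 1 := by
      ext p; simp only [Function.uncurry, indicator_apply, mem_Ici, mem_ofPred_eq, Pi.one_apply]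
    rw [h]
    exact (integrable_const 1).indicator (measurableSet_le measurable_fst measurable_snd)
  simp_rw [max_sub_sub_max_sub_eq_integral_indicator hab, intervalIntegral.integral_of_le hab]
  rw [integral_integral_swap hint]
  refine integral_congr_ae (Filter.Eventually.of_forall fun s => ?_)
  have h : (fun y => (Ici y).indicator (1 : ℝ → ℝ) s) = (Iic s).indicator 1 := by
    ext y; simp only [indicator_apply, mem_Ici, mem_Iic, Pi.one_apply]
  simp only [h, integral_indicator_one measurableSet_Iic]

lemma integrable_pinball [IsFiniteMeasure Q] (hQ : Integrable id Q) (τ t : ℝ) :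
    Integrable (fun y => pinball τ y t) Q := by
  simp only [pinball_eq_add_max]
  exact ((hQ.sub (integrable_const t)).const_mul τ).add ((integrable_const t).sub hQ).pos_part

variable [IsProbabilityMeasure Q]

lemma innerRisk_sub_innerRisk (hQ : Integrable id Q) (τ : ℝ) {a b : ℝ} (hab : a ≤ b) :
    innerRisk Q τ b - innerRisk Q τ a = ∫ s in a..b, (Q.real (Iic s) - τ) := by
  have hmax : Integrable (fun y => max (b - y) 0 - max (a - y) 0) Q :=
    ((integrable_const b).sub hQ).pos_part.sub ((integrable_const a).sub hQ).pos_part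
  have hcdf : IntervalIntegrable (fun s => Q.real (Iic s)) volume a b :=
    Monotone.intervalIntegrable fun _ _ h => measureReal_mono (Iic_subset_Iic.2 h)
  calc innerRisk Q τ b - innerRisk Q τ a
      = ∫ y, ((max (b - y) 0 - max (a - y) 0) + τ * (a - b)) ∂Q := by
        rw [innerRisk, innerRisk, ← integral_sub (integrable_pinball hQ τ b)
          (integrable_pinball hQ τ a)]
        congr 1; ext y
        rw [pinball_eq_add_max, pinball_eq_add_max]
        ring
    _ = (∫ s in a..b, Q.real (Iic s)) + τ * (a - b) := by
        rw [integral_add hmax (integrable_const _), integral_max_sub_sub_max_sub hab,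
          integral_const, probReal_univ, one_smul]
    _ = ∫ s in a..b, (Q.real (Iic s) - τ) := by
        rw [intervalIntegral.integral_sub hcdf intervalIntegrable_const,
          intervalIntegral.integral_const, smul_eq_mul]
        ring

lemma measureReal_Iic_add_Ioo_add_Ici {a b : ℝ} (hab : a < b) :
    Q.real (Iic a) + Q.real (Ioo a b) + Q.real (Ici b) = 1 := by
  rw [← measureReal_union ((Iic_disjoint_Ioi le_rfl).mono_right Ioo_subset_Ioi_self)
    measurableSet_Ioo, Iic_union_Ioo_eq_Iio hab, ← compl_Iio,
    probReal_compl_eq_one_sub measurableSet_Iio, add_sub_cancel]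

lemma innerRisk_sub_sub_innerRisk (hQ : Integrable id Q) (τ m : ℝ) {t : ℝ} (ht : 0 ≤ t) :
    innerRisk Q τ (m - t) - innerRisk Q τ m
      = t * (Q.real (Ici m) - (1 - τ)) + ∫ s in (0 : ℝ)..t, Q.real (Ioo (m - s) m) := by
  have hIoo : IntervalIntegrable (fun s => Q.real (Ioo (m - s) m)) volume 0 t :=
    Monotone.intervalIntegrable fun _ _ h => measureReal_mono (Ioo_subset_Ioo (by linarith) le_rfl)
  calc innerRisk Q τ (m - t) - innerRisk Q τ m
      = ∫ x in (m - t)..m, (τ - Q.real (Iic x)) := by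
        rw [← neg_sub, innerRisk_sub_innerRisk hQ τ (by linarith), ← intervalIntegral.integral_neg]
        simp only [neg_sub]
    _ = ∫ s in (0 : ℝ)..t, (τ - Q.real (Iic (m - s))) := by
        rw [intervalIntegral.integral_comp_sub_left (fun x => τ - Q.real (Iic x)), sub_zero]
    _ = ∫ s in (0 : ℝ)..t, ((Q.real (Ici m) - (1 - τ)) + Q.real (Ioo (m - s) m)) := by
        refine intervalIntegral.integral_congr_ae (Filter.Eventually.of_forall fun s hs => ?_)
        rw [uIoc_of_le ht] at hs
        linarith [measureReal_Iic_add_Ioo_add_Ici (Q := Q) (show m - s < m by linarith [hs.1])]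
    _ = t * (Q.real (Ici m) - (1 - τ)) + ∫ s in (0 : ℝ)..t, Q.real (Ioo (m - s) m) := by
        rw [intervalIntegral.integral_add intervalIntegrable_const hIoo,
          intervalIntegral.integral_const, smul_eq_mul, sub_zero]

lemma innerRisk_le_of_mem_quantileSet (hQ : Integrable id Q) {τ m : ℝ} (hm : m ∈ quantileSet Q τ)
    (s : ℝ) :
    innerRisk Q τ m ≤ innerRisk Q τ s := by
  rcases le_total m s with hms | hsm
  · refine sub_nonneg.1 ((innerRisk_sub_innerRisk hQ τ hms).symm ▸
      intervalIntegral.integral_nonneg hms fun x hx => ?_)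
    exact sub_nonneg.2 (hm.1.trans (measureReal_mono (Iic_subset_Iic.2 hx.1)))
  · have h := innerRisk_sub_sub_innerRisk hQ τ m (sub_nonneg.2 hsm)
    rw [sub_sub_cancel] at h
    refine sub_nonneg.1 (h ▸ add_nonneg (mul_nonneg (sub_nonneg.2 hsm) (sub_nonneg.2 hm.2)) ?_)
    exact intervalIntegral.integral_nonneg (sub_nonneg.2 hsm) fun _ _ => measureReal_nonneg

end InnerRisk


namespace StieltjesFunction

theorem isClosed_setOf_le (f : StieltjesFunction ℝ) (c : ℝ) : IsClosed {x | c ≤ f x} := by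
  refine isOpen_compl_iff.1 (isOpen_iff_mem_nhds.2 fun x hx => ?_)
  simp only [mem_compl_iff, mem_ofPred_eq, not_le] at hx
  rw [← nhdsLE_sup_nhdsGE, Filter.mem_sup]
  constructor
  · filter_upwards [self_mem_nhdsWithin] with y hy
    exact not_le.2 ((f.mono hy).trans_lt hx)
  · filter_upwards [(f.right_continuous x).eventually (eventually_lt_nhds hx)] with y hy
    exact not_le.2 hy

end StieltjesFunction


section Quantile

open ProbabilityTheory

lemma bddBelow_setOf_le_cdf (Q : Measure ℝ) {τ : ℝ} (hτ : 0 < τ) :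
    BddBelow {t | τ ≤ cdf Q t} := by
  obtain ⟨a, ha⟩ := Filter.eventually_atBot.1 ((tendsto_cdf_atBot (μ := Q)).eventually_lt_const hτ)
  exact ⟨a, fun t ht => le_of_not_gt fun hta => (ha t hta.le).not_ge ht⟩

lemma nonempty_setOf_le_cdf (Q : Measure ℝ) {τ : ℝ} (hτ : τ < 1) : {t | τ ≤ cdf Q t}.Nonempty :=
  ((tendsto_cdf_atTop (μ := Q)).eventually_const_lt hτ).exists.imp fun _ => le_of_lt

variable (Q : Measure ℝ) [IsProbabilityMeasure Q]

lemma isClosed_setOf_le_measureReal_Ici (c : ℝ) : IsClosed {t | c ≤ Q.real (Ici t)} := by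
  have : IsProbabilityMeasure (Q.map Neg.neg) := Measure.isProbabilityMeasure_map (by fun_prop)
  have hIci (t : ℝ) : Q.real (Ici t) = cdf (Q.map Neg.neg) (-t) := by
    rw [cdf_eq_real, measureReal_def, measureReal_def,
      Measure.map_apply measurable_neg measurableSet_Iic, neg_preimage, neg_Iic, neg_neg]
  simp only [hIci]
  exact ((cdf _).isClosed_setOf_le c).preimage continuous_neg

lemma quantileSet_eq_inter (τ : ℝ) :
    quantileSet Q τ = {t | τ ≤ cdf Q t} ∩ {t | 1 - τ ≤ Q.real (Ici t)} := by
  ext t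
  simp only [quantileSet, mem_inter_iff, mem_ofPred_eq, cdf_eq_real, measureReal_def]

lemma isClosed_quantileSet (τ : ℝ) : IsClosed (quantileSet Q τ) := by
  rw [quantileSet_eq_inter]
  exact ((cdf Q).isClosed_setOf_le τ).inter (isClosed_setOf_le_measureReal_Ici Q _)

lemma sInf_setOf_le_cdf_mem_quantileSet {τ : ℝ} (hτ : τ ∈ Ioo (0 : ℝ) 1) :
    sInf {t | τ ≤ cdf Q t} ∈ quantileSet Q τ := by
  set A := {t | τ ≤ cdf Q t}
  have hbdd := bddBelow_setOf_le_cdf Q hτ.1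
  have hA : sInf A ∈ A :=
    ((cdf Q).isClosed_setOf_le τ).csInf_mem (nonempty_setOf_le_cdf Q hτ.2) hbdd
  -- Below the lower quantile, `Q (Ici s) ≥ 1 - cdf Q s > 1 - τ`; pass to the limit `s ↑ sInf A`.
  have hlt : Iio (sInf A) ⊆ {t | 1 - τ ≤ Q.real (Ici t)} := fun s hs => by
    have hsA : cdf Q s < τ := not_le.1 (notMem_of_lt_csInf (s := A) hs hbdd)
    have : Q.real (Iio s) ≤ cdf Q s := cdf_eq_real Q s ▸ measureReal_mono Iio_subset_Iic_self
    simp only [mem_ofPred_eq, ← compl_Iio, probReal_compl_eq_one_sub measurableSet_Iio]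
    linarith
  have hB := (isClosed_setOf_le_measureReal_Ici Q (1 - τ)).closure_subset_iff.2 hlt
  rw [closure_Iio] at hB
  rw [quantileSet_eq_inter]
  exact ⟨hA, hB self_mem_Iic⟩

lemma tqmin_mem_quantileSet {τ : ℝ} (hτ : τ ∈ Ioo (0 : ℝ) 1) : tqmin Q τ ∈ quantileSet Q τ :=
  (isClosed_quantileSet Q τ).csInf_mem ⟨_, sInf_setOf_le_cdf_mem_quantileSet Q hτ⟩
    ((bddBelow_setOf_le_cdf Q hτ.1).mono (quantileSet_eq_inter Q τ ▸ inter_subset_left))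

end Quantile

/-- Excess inner risk to the left of the quantile interval:
`C_Q(t*_min − t) − C*_Q = t·q₋ + ∫₀ᵗ Q((t*_min−s, t*_min)) ds` with
`q₋ = Q([t*_min,∞)) − (1−τ)`. -/
theorem stmt8 (τ : ℝ) (hτ : τ ∈ Set.Ioo (0:ℝ) 1) (Q : Measure ℝ) [IsProbabilityMeasure Q]
    (hsupp : Q (Set.Icc (-1:ℝ) 1)ᶜ = 0) :
    ∀ t : ℝ, 0 ≤ t →
      innerRisk Q τ (tqmin Q τ - t) - (⨅ s : ℝ, innerRisk Q τ s)
        = t * ((Q (Set.Ici (tqmin Q τ))).toReal - (1 - τ))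
          + ∫ s in (0:ℝ)..t, (Q (Set.Ioo (tqmin Q τ - s) (tqmin Q τ))).toReal := by
  intro t ht
  have hQ : Integrable id Q := Integrable.of_bound measurable_id.aestronglyMeasurable 1 <| by
    filter_upwards [mem_ae_iff.2 hsupp] with y hy
    exact abs_le.2 hy
  have hmin := innerRisk_le_of_mem_quantileSet hQ (tqmin_mem_quantileSet Q hτ)
  have hinf : ⨅ s : ℝ, innerRisk Q τ s = innerRisk Q τ (tqmin Q τ) :=
    IsGLB.ciInf_eq (IsLeast.isGLB ⟨mem_range_self _, forall_mem_range.2 hmin⟩)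
  rw [hinf]
  exact innerRisk_sub_sub_innerRisk hQ τ (tqmin Q τ) ht
end

section
/- Let ν be a probability measure with support in [−1,1], t_min < t_max in [−1,1] with ν([t_min, t_max]) = 0, and Q = (1−α−β)ν + α·δ_{t_min} + β·δ_{t_max} for α, β ∈ (0,1] with α + β ≤ 1. Then for τ := (1−α−β)·ν((−∞,t_min]) + α, the τ-quantile set of Q equals [t_min, t_max], and this quantile is of type q = 1 with b_Q = min{α, β}. -/
/-!
A point `t` is a `τ`-quantile of a probability measure `Q` iff `Q (-∞, t) ≤ τ ≤ Q (-∞, t]`.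
Since `Q` puts no mass strictly between `t_min` and `t_max`, we have
`Q (-∞, t_max) = Q (-∞, t_min] = τ`, so every point of `[t_min, t_max]` is a quantile; the atoms
of mass `α` at `t_min` and `β` at `t_max` push `Q (-∞, t]` below `τ` left of `t_min` and
`Q (-∞, t)` above `τ` right of `t_max`. These atoms also give `b_Q = min {α, β}`.
-/

open MeasureTheory Set

lemma mem_quantileSet_iff {Q : Measure ℝ} [IsProbabilityMeasure Q] {τ t : ℝ} :
    t ∈ quantileSet Q τ ↔ Q.real (Iio t) ≤ τ ∧ τ ≤ Q.real (Iic t) := by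
  have hIci : Q.real (Ici t) = 1 - Q.real (Iio t) := by
    rw [← compl_Iio, probReal_compl_eq_one_sub measurableSet_Iio]
  change τ ≤ Q.real (Iic t) ∧ 1 - τ ≤ Q.real (Ici t) ↔ _
  rw [hIci]
  constructor <;> rintro ⟨h₁, h₂⟩ <;> constructor <;> linarith

lemma measureReal_Iic_eq_add_singleton (Q : Measure ℝ) [IsFiniteMeasure Q] (a : ℝ) :
    Q.real (Iic a) = Q.real (Iio a) + Q.real {a} := by
  rw [← Iio_union_right, measureReal_union (by simp) (measurableSet_singleton a)]

theorem quantileSet_eq_Icc_of_atoms {Q : Measure ℝ} [IsProbabilityMeasure Q] {a b : ℝ}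
    (hab : a < b) (hgap : Q (Ioo a b) = 0) (ha : 0 < Q.real {a}) (hb : 0 < Q.real {b}) :
    quantileSet Q (Q.real (Iic a)) = Icc a b := by
  have hIio_b : Q.real (Iio b) = Q.real (Iic a) := by
    rw [← Iic_union_Ioo_eq_Iio hab,
      measureReal_union ((Iic_disjoint_Ioi le_rfl).mono_right Ioo_subset_Ioi_self)
        measurableSet_Ioo, (measureReal_eq_zero_iff).2 hgap, add_zero]
  ext t
  rw [mem_quantileSet_iff, mem_Icc]
  constructor
  · rintro ⟨h₁, h₂⟩
    constructor
    · by_contra! ht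
      have := measureReal_mono (μ := Q) (Iic_subset_Iio.2 ht)
      linarith [measureReal_Iic_eq_add_singleton Q a]
    · by_contra! ht
      have := measureReal_mono (μ := Q) (Iic_subset_Iio.2 ht)
      linarith [measureReal_Iic_eq_add_singleton Q b]
  · rintro ⟨h₁, h₂⟩
    constructor
    · calc Q.real (Iio t) ≤ Q.real (Iio b) := measureReal_mono (Iio_subset_Iio h₂)
        _ = Q.real (Iic a) := hIio_b
    · exact measureReal_mono (Iic_subset_Iic.2 h₁)

theorem quantileTypeQ_one_of_quantileSet_eq_Icc {Q : Measure ℝ} {τ a b : ℝ} (hab : a < b)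
    (hset : quantileSet Q τ = Icc a b) (ha : 0 < Q.real {a}) (hb : 0 < Q.real {b}) :
    quantileTypeQ Q τ 1 2 (min (Q.real {a}) (Q.real {b})) := by
  have hmin : tqmin Q τ = a := by rw [tqmin, hset, csInf_Icc hab.le]
  have hmax : tqmax Q τ = b := by rw [tqmax, hset, csSup_Icc hab.le]
  refine Or.inr ⟨rfl, rfl, ?_, ?_, ?_⟩
  · rwa [hmin]
  · rwa [hmax]
  · rw [hmin, hmax, if_pos hab.ne]
    rfl

lemma measureReal_smul_add_smul_dirac_add_smul_dirac {X : Type*} [MeasurableSpace X]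
    [MeasurableSingletonClass X] (ν : Measure X) [IsFiniteMeasure ν] {c α β : ℝ} (hc : 0 ≤ c)
    (hα : 0 ≤ α) (hβ : 0 ≤ β) (x y : X) (s : Set X) :
    (ENNReal.ofReal c • ν + ENNReal.ofReal α • Measure.dirac x
        + ENNReal.ofReal β • Measure.dirac y).real s
      = c * ν.real s + α * s.indicator 1 x + β * s.indicator 1 y := by
  have h_ne_top : ∀ (a : ℝ) (μ : Measure X) [IsFiniteMeasure μ], (ENNReal.ofReal a • μ) s ≠ ⊤ :=
    fun a μ _ => by simp [ENNReal.mul_eq_top]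
  have h_sum_ne_top : (ENNReal.ofReal c • ν + ENNReal.ofReal α • Measure.dirac x) s ≠ ⊤ := by
    rw [Measure.add_apply]
    exact ENNReal.add_ne_top.2 ⟨h_ne_top _ _, h_ne_top _ _⟩
  rw [measureReal_add_apply h_sum_ne_top (h_ne_top _ _), measureReal_add_apply (h_ne_top _ _) (h_ne_top _ _)]
  by_cases hx : x ∈ s <;> by_cases hy : y ∈ s <;> simp [hx, hy, hc, hα, hβ, Measure.real]

lemma isProbabilityMeasure_smul_add_smul_dirac_add_smul_dirac {X : Type*} [MeasurableSpace X]
    (ν : Measure X) [IsProbabilityMeasure ν] {c α β : ℝ} (hc : 0 ≤ c) (hα : 0 ≤ α)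
    (hβ : 0 ≤ β) (hsum : c + α + β = 1) (x y : X) :
    IsProbabilityMeasure (ENNReal.ofReal c • ν + ENNReal.ofReal α • Measure.dirac x
        + ENNReal.ofReal β • Measure.dirac y) := by
  constructor
  simp only [Measure.add_apply, Measure.smul_apply, measure_univ, smul_eq_mul, mul_one]
  rw [← ENNReal.ofReal_add hc hα, ← ENNReal.ofReal_add (by positivity) hβ, hsum,
    ENNReal.ofReal_one]

theorem stmt18_general (α β tmin tmax : ℝ)
    (hα : α ∈ Set.Ioc (0:ℝ) 1) (hβ : β ∈ Set.Ioc (0:ℝ) 1) (hαβ : α + β ≤ 1)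
    (hlt : tmin < tmax)
    (ν : Measure ℝ) [IsProbabilityMeasure ν]
    (hν0 : ν (Set.Icc tmin tmax) = 0)
    (Q : Measure ℝ)
    (hQ : Q = ENNReal.ofReal (1 - α - β) • ν + ENNReal.ofReal α • Measure.dirac tmin
            + ENNReal.ofReal β • Measure.dirac tmax)
    (τ : ℝ) (hτ : τ = (1 - α - β) * (ν (Set.Iic tmin)).toReal + α) :
    quantileSet Q τ = Set.Icc tmin tmax ∧ quantileTypeQ Q τ 1 2 (min α β) := by
  have hc : 0 ≤ 1 - α - β := by linarith
  have hQ_real := hQ ▸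
    measureReal_smul_add_smul_dirac_add_smul_dirac ν hc hα.1.le hβ.1.le tmin tmax
  have : IsProbabilityMeasure Q := hQ ▸
    isProbabilityMeasure_smul_add_smul_dirac_add_smul_dirac ν hc hα.1.le hβ.1.le (by ring) _ _
  have hν_null : ∀ s ⊆ Icc tmin tmax, ν.real s = 0 := fun s hs =>
    (measureReal_eq_zero_iff).2 (measure_mono_null hs hν0)
  have hQmin : Q.real {tmin} = α := by
    simp [hQ_real, hν_null {tmin} (by simp [hlt.le]), hlt.ne']
  have hQmax : Q.real {tmax} = β := by
    simp [hQ_real, hν_null {tmax} (by simp [hlt.le]), hlt.ne]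
  have hgap : Q (Ioo tmin tmax) = 0 := by
    rw [← measureReal_eq_zero_iff]
    simp [hQ_real, hν_null _ Ioo_subset_Icc_self]
  have hτQ : τ = Q.real (Iic tmin) := by
    rw [hQ_real, hτ]
    simp [hlt.not_ge, Measure.real]
  have hset : quantileSet Q τ = Icc tmin tmax := hτQ ▸
    quantileSet_eq_Icc_of_atoms hlt hgap (hQmin ▸ hα.1) (hQmax ▸ hβ.1)
  refine ⟨hset, ?_⟩
  simpa [hQmin, hQmax] using
    quantileTypeQ_one_of_quantileSet_eq_Icc hlt hset (hQmin ▸ hα.1) (hQmax ▸ hβ.1)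

/-- If `Q = (1−α−β)·ν + α·δ_{t_min} + β·δ_{t_max}` with `ν([t_min,t_max]) = 0`, then for
`τ = (1−α−β)·ν((−∞,t_min]) + α` the τ-quantile set of `Q` is `[t_min, t_max]` and this quantile
is of type `q = 1` with `b_Q = min{α, β}`. -/
theorem stmt18 (α β tmin tmax : ℝ)
    (hα : α ∈ Set.Ioc (0:ℝ) 1) (hβ : β ∈ Set.Ioc (0:ℝ) 1) (hαβ : α + β ≤ 1)
    (htm : tmin ∈ Set.Icc (-1:ℝ) 1) (htM : tmax ∈ Set.Icc (-1:ℝ) 1) (hlt : tmin < tmax)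
    (ν : Measure ℝ) [IsProbabilityMeasure ν] (hν : ν (Set.Icc (-1:ℝ) 1)ᶜ = 0)
    (hν0 : ν (Set.Icc tmin tmax) = 0)
    (Q : Measure ℝ)
    (hQ : Q = ENNReal.ofReal (1 - α - β) • ν + ENNReal.ofReal α • Measure.dirac tmin
            + ENNReal.ofReal β • Measure.dirac tmax)
    (τ : ℝ) (hτ : τ = (1 - α - β) * (ν (Set.Iic tmin)).toReal + α) :
    quantileSet Q τ = Set.Icc tmin tmax ∧ quantileTypeQ Q τ 1 2 (min α β) :=
  stmt18_general α β tmin tmax hα hβ hαβ hlt ν hν0 Q hQ τ hτ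
end
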